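/- arXiv:2604.19296 — 4 statements merged into one kernel-verified Lean document; each statement's English description precedes it below -/
import Mathlib

section
/- Residual debiasing identity: fix an integer K ≥ 1 and let (A, (X₁, Y₁), …, (X_K, Y_K)) have joint law given by A ~ P_A and, conditionally on A = a, the pairs (X_k, Y_k) i.i.d. with law κ(a) ⊗ ρ(a,·). Let ŝ : 𝒜 × Ω → ℝ be jointly measurable with ŝ(a,·) ∈ L²(Ω, κ(a)) for P_A-a.e. a, set Δ := ŝ − s₀, and assume ‖Δ‖_{L²(P)} < ∞, E[β₀(A, X₁)²] < ∞, E[Y₁²] < ∞, and a ↦ Dg_{S₀(a)}(Δ(a,·)) P_A-integrable. Then E[(1/K) Σ_{k=1}^K β₀(A, X_k)(Y_k − ŝ(A, X_k))] = − ∫ Dg_{S₀(a)}(Δ(a,·)) dP_A(a); i.e., the weighted residual term exactly recovers (with opposite sign) the linear plug-in bias. -/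
open MeasureTheory ProbabilityTheory
open scoped ProbabilityTheory

private lemma l2_mul_integrable {α : Type*} [MeasurableSpace α] {ν : Measure α}
    {f g : α → ℝ} (hf : MemLp f 2 ν) (hg : MemLp g 2 ν) :
    Integrable (fun x => f x * g x) ν := by
  have h : MemLp (f • g) 1 ν := hg.smul (r := 1) hf
  exact memLp_one_iff_integrable.mp h

private lemma map_eval_pi' {ι : Type*} [Fintype ι] {α : ι → Type*} [∀ i, MeasurableSpace (α i)]
    (μ : ∀ i, Measure (α i)) [∀ i, IsProbabilityMeasure (μ i)] (k : ι) :
    (Measure.pi μ).map (Function.eval k) = μ k := by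
  classical
  ext s hs
  rw [Measure.map_apply (measurable_pi_apply k) hs, Set.eval_preimage, Measure.pi_pi]
  rw [Finset.prod_eq_single k (fun i _ hik => by simp [Function.update_of_ne hik])
    (fun h => absurd (Finset.mem_univ k) h)]
  simp

/-- **Residual debiasing identity.** Fix `K ≥ 1` and let `(A, (X₁,Y₁), …, (X_K,Y_K))` have
joint law `A ~ P_A` with pairs conditionally i.i.d. `κ(a) ⊗ ρ(a,·)` given `A = a`. With
`Δ := ŝ − s₀` and the stated moment conditions,
`E[(1/K) Σₖ β₀(A,Xₖ)(Yₖ − ŝ(A,Xₖ))] = − ∫ Dg_{S₀(a)}(Δ(a,·)) dP_A(a)`. -/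
theorem stmt5 {𝒜 Ω : Type*} [MeasurableSpace 𝒜] [MeasurableSpace Ω]
    (PA : Measure 𝒜) [IsProbabilityMeasure PA]
    (κ : Kernel 𝒜 Ω) [IsMarkovKernel κ]
    (μ : Measure Ω) [IsFiniteMeasure μ]
    (Cov : ℝ) (hCov : 0 < Cov)
    -- design overlap: μ ≪ κ a with dμ/dκ(a) ≤ Cov
    (hac : ∀ᵐ a ∂PA, μ ≪ κ a)
    (hbdd : ∀ᵐ a ∂PA, ∀ᵐ x ∂(κ a), μ.rnDeriv (κ a) x ≤ ENNReal.ofReal Cov)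
    -- the functional g, Fréchet differentiable
    (g : Lp ℝ 2 μ → ℝ) (Dg : Lp ℝ 2 μ → Lp ℝ 2 μ →L[ℝ] ℝ)
    (hdiff : ∀ u : Lp ℝ 2 μ, HasFDerivAt g (Dg u) u)
    -- the true solution operator
    (s₀ : 𝒜 × Ω → ℝ) (hs₀ : Measurable s₀)
    (S₀ : 𝒜 → Lp ℝ 2 μ)
    (hS₀ : ∀ᵐ a ∂PA, ⇑(S₀ a) =ᵐ[μ] fun x => s₀ (a, x))
    -- the debiasing weight β₀ with finite L²(P) norm and the conditional Riesz identity
    (β₀ : 𝒜 × Ω → ℝ) (hβ₀meas : Measurable β₀)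
    (hβ₀P : Integrable (fun p => β₀ p ^ 2) (PA ⊗ₘ κ))
    (hriesz : ∀ᵐ a ∂PA, ∀ (h : Ω → ℝ), MemLp h 2 (κ a) → ∀ (hμ : MemLp h 2 μ),
      ∫ x, β₀ (a, x) * h x ∂(κ a) = Dg (S₀ a) (hμ.toLp h))
    -- the noise kernel ρ: unbiased, with finite second moments
    (ρ : Kernel (𝒜 × Ω) ℝ) [IsMarkovKernel ρ]
    (hρmean : ∀ᵐ a ∂PA, ∀ᵐ x ∂(κ a), (∫ y, y ∂(ρ (a, x))) = s₀ (a, x))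
    (hρsq : ∀ᵐ a ∂PA, ∀ᵐ x ∂(κ a), Integrable (fun y => y ^ 2) (ρ (a, x)))
    -- E[Y₁²] < ∞
    (hY2 : Integrable (fun z : 𝒜 × (Ω × ℝ) => z.2.2 ^ 2) (PA ⊗ₘ (κ ⊗ₖ ρ)))
    -- number of observations
    (K : ℕ) (hK : 1 ≤ K)
    -- the estimator ŝ, with sections in L²(κ a); Δ := ŝ − s₀ with L²(μ) sections ΔL
    (shat : 𝒜 × Ω → ℝ) (hshatmeas : Measurable shat)
    (hshatκ : ∀ᵐ a ∂PA, MemLp (fun x => shat (a, x)) 2 (κ a))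
    (ΔL : 𝒜 → Lp ℝ 2 μ)
    (hΔL : ∀ᵐ a ∂PA, ⇑(ΔL a) =ᵐ[μ] fun x => shat (a, x) - s₀ (a, x))
    (hΔP : Integrable (fun p => (shat p - s₀ p) ^ 2) (PA ⊗ₘ κ))
    (hint : Integrable (fun a => Dg (S₀ a) (ΔL a)) PA) :
    ∫ a, ∫ zs : Fin K → Ω × ℝ,
        ((K : ℝ)⁻¹ * ∑ k : Fin K, β₀ (a, (zs k).1) * ((zs k).2 - shat (a, (zs k).1)))
          ∂(Measure.pi fun _ : Fin K => (κ ⊗ₖ ρ) a) ∂PA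
      = -∫ a, Dg (S₀ a) (ΔL a) ∂PA := by
  classical
  have hβsec : ∀ᵐ a ∂PA, Integrable (fun x => β₀ (a, x) ^ 2) (κ a) :=
    ((Measure.integrable_compProd_iff hβ₀P.aestronglyMeasurable).mp hβ₀P).1
  have hΔsec : ∀ᵐ a ∂PA, Integrable (fun x => (shat (a, x) - s₀ (a, x)) ^ 2) (κ a) :=
    ((Measure.integrable_compProd_iff hΔP.aestronglyMeasurable).mp hΔP).1
  have hYsec : ∀ᵐ a ∂PA, Integrable (fun z : Ω × ℝ => z.2 ^ 2) ((κ ⊗ₖ ρ) a) :=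
    ((Measure.integrable_compProd_iff hY2.aestronglyMeasurable).mp hY2).1
  have key : ∀ᵐ a ∂PA,
      (∫ zs : Fin K → Ω × ℝ,
        ((K : ℝ)⁻¹ * ∑ k : Fin K, β₀ (a, (zs k).1) * ((zs k).2 - shat (a, (zs k).1)))
          ∂(Measure.pi fun _ : Fin K => (κ ⊗ₖ ρ) a))
        = -(Dg (S₀ a) (ΔL a)) := by
    filter_upwards [hβsec, hΔsec, hYsec, hshatκ, hρmean, hρsq, hriesz, hΔL, hac, hbdd] with a
      hβ2 hΔ2 hY2a hshat hmean hsq hR hΔLa haca hbdda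
    have hmβ : Measurable (fun x => β₀ (a, x)) := hβ₀meas.comp measurable_prodMk_left
    have hms : Measurable (fun x => s₀ (a, x)) := hs₀.comp measurable_prodMk_left
    have hmsh : Measurable (fun x => shat (a, x)) := hshatmeas.comp measurable_prodMk_left
    have hβmem : MemLp (fun x => β₀ (a, x)) 2 (κ a) :=
      (memLp_two_iff_integrable_sq hmβ.aestronglyMeasurable).mpr hβ2
    have hΔmemκ : MemLp (fun x => shat (a, x) - s₀ (a, x)) 2 (κ a) :=
      (memLp_two_iff_integrable_sq (hmsh.sub hms).aestronglyMeasurable).mpr hΔ2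
    have hle : μ ≤ (ENNReal.ofReal Cov) • κ a := by
      refine Measure.le_iff.mpr fun s hs => ?_
      conv_lhs => rw [← Measure.withDensity_rnDeriv_eq μ (κ a) haca]
      rw [withDensity_apply _ hs]
      calc ∫⁻ x in s, μ.rnDeriv (κ a) x ∂(κ a)
          ≤ ∫⁻ _ in s, ENNReal.ofReal Cov ∂(κ a) :=
            lintegral_mono_ae (ae_restrict_of_ae hbdda) 
        _ = ENNReal.ofReal Cov * κ a s := by rw [setLIntegral_const]
        _ = ((ENNReal.ofReal Cov) • κ a) s := by simp [Measure.smul_apply]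
    have hΔmemμ : MemLp (fun x => shat (a, x) - s₀ (a, x)) 2 μ :=
      (hΔmemκ.smul_measure ENNReal.ofReal_ne_top).mono_measure hle
    have hRid : ∫ x, β₀ (a, x) * (shat (a, x) - s₀ (a, x)) ∂(κ a) = Dg (S₀ a) (ΔL a) := by
      have h1 := hR _ hΔmemκ hΔmemμ
      have h2 : hΔmemμ.toLp _ = ΔL a := Lp.ext (hΔmemμ.coeFn_toLp.trans hΔLa.symm)
      rw [h2] at h1; exact h1
    have hfst : MeasurePreserving (Prod.fst : Ω × ℝ → Ω) ((κ ⊗ₖ ρ) a) (κ a) := by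
      refine ⟨measurable_fst, ?_⟩
      have h := Kernel.fst_compProd κ ρ
      calc ((κ ⊗ₖ ρ) a).map Prod.fst = Kernel.fst (κ ⊗ₖ ρ) a := (Kernel.fst_apply _ _).symm
        _ = κ a := by rw [h]
    have hβν : MemLp (fun z : Ω × ℝ => β₀ (a, z.1)) 2 ((κ ⊗ₖ ρ) a) :=
      hβmem.comp_measurePreserving hfst
    have hYν : MemLp (fun z : Ω × ℝ => z.2) 2 ((κ ⊗ₖ ρ) a) :=
      (memLp_two_iff_integrable_sq measurable_snd.aestronglyMeasurable).mpr hY2a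
    have hshν : MemLp (fun z : Ω × ℝ => shat (a, z.1)) 2 ((κ ⊗ₖ ρ) a) :=
      hshat.comp_measurePreserving hfst
    have hfaint : Integrable (fun z : Ω × ℝ => β₀ (a, z.1) * (z.2 - shat (a, z.1)))
        ((κ ⊗ₖ ρ) a) := l2_mul_integrable hβν (hYν.sub hshν)
    have hI : ∫ z : Ω × ℝ, β₀ (a, z.1) * (z.2 - shat (a, z.1)) ∂((κ ⊗ₖ ρ) a)
        = -(Dg (S₀ a) (ΔL a)) := by
      rw [ProbabilityTheory.integral_compProd hfaint]
      have heq : ∀ᵐ x ∂(κ a),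
          (∫ y, β₀ (a, x) * (y - shat (a, x)) ∂(ρ (a, x)))
            = -(β₀ (a, x) * (shat (a, x) - s₀ (a, x))) := by
        filter_upwards [hmean, hsq] with x hx hxsq
        have hyint : Integrable (fun y : ℝ => y) (ρ (a, x)) := by
          have hy2 : MemLp (fun y : ℝ => y) 2 (ρ (a, x)) :=
            (memLp_two_iff_integrable_sq measurable_id.aestronglyMeasurable).mpr hxsq
          exact memLp_one_iff_integrable.mp (hy2.mono_exponent (by norm_num))
        rw [integral_const_mul, integral_sub hyint (integrable_const _), hx, integral_const]
        simp; ring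
      rw [integral_congr_ae heq, integral_neg, hRid]
    have hmp : ∀ k : Fin K, MeasurePreserving (Function.eval k)
        (Measure.pi fun _ : Fin K => (κ ⊗ₖ ρ) a) ((κ ⊗ₖ ρ) a) :=
      fun k => ⟨measurable_pi_apply k, map_eval_pi' _ k⟩
    have hfm : AEStronglyMeasurable (fun z : Ω × ℝ => β₀ (a, z.1) * (z.2 - shat (a, z.1)))
        ((κ ⊗ₖ ρ) a) := hfaint.aestronglyMeasurable
    have hcomp : ∀ k : Fin K,
        Integrable (fun zs : Fin K → Ω × ℝ => β₀ (a, (zs k).1) * ((zs k).2 - shat (a, (zs k).1)))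
          (Measure.pi fun _ : Fin K => (κ ⊗ₖ ρ) a) :=
      fun k => ((hmp k).integrable_comp hfm).mpr hfaint
    have hcoord : ∀ k : Fin K,
        ∫ zs : Fin K → Ω × ℝ, β₀ (a, (zs k).1) * ((zs k).2 - shat (a, (zs k).1))
            ∂(Measure.pi fun _ : Fin K => (κ ⊗ₖ ρ) a)
          = -(Dg (S₀ a) (ΔL a)) := by
      intro k
      have h := integral_map (φ := Function.eval k)
        (μ := Measure.pi fun _ : Fin K => (κ ⊗ₖ ρ) a)
        (f := fun z : Ω × ℝ => β₀ (a, z.1) * (z.2 - shat (a, z.1)))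
        (measurable_pi_apply k).aemeasurable (by rwa [(hmp k).map_eq])
      rw [(hmp k).map_eq] at h
      rw [← hI, ← h]
    rw [integral_const_mul, integral_finset_sum _ (fun k _ => hcomp k)]
    simp only [hcoord, Finset.sum_const, Finset.card_univ, Fintype.card_fin, nsmul_eq_mul]
    rw [inv_mul_cancel_left₀ (Nat.cast_ne_zero.mpr (by omega))]
  rw [integral_congr_ae key, integral_neg]
end

section
/- Neyman orthogonality of the debiasing score with respect to the solution operator: let h : 𝒜 × Ω → ℝ be jointly measurable with h(a,·) ∈ L²(Ω, μ) ∩ L²(Ω, κ(a)) for P_A-a.e. a, ∫ ‖h(a,·)‖²_{L²(μ)} dP_A(a) < ∞, and such that a ↦ Dg_{S₀(a)}(h(a,·)) and (a,x) ↦ β₀(a,x) h(a,x), (a,x,y) ↦ β₀(a,x)(y − s₀(a,x)) are integrable with respect to the relevant laws. Define M(t) := ∫_𝒜 [ g(S₀(a) + t·h(a,·)) + ∫_Ω ∫_ℝ β₀(a,x)(y − s₀(a,x) − t·h(a,x)) dρ(a,x)(y) dκ(a)(x) ] dP_A(a). Then M is differentiable at t = 0 with M′(0) = 0. -/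
open MeasureTheory ProbabilityTheory
open scoped ProbabilityTheory


open MeasureTheory ProbabilityTheory Filter Set
open scoped ENNReal Topology Classical

set_option linter.unusedSectionVars false

namespace NeymanAux

variable {𝒜 Ω : Type*} [MeasurableSpace 𝒜] [MeasurableSpace Ω]
variable {μ : Measure Ω} [IsFiniteMeasure μ]

lemma toLp_eq_of {f : Ω → ℝ} (h : MemLp f 2 μ) {G : Lp ℝ 2 μ} (hfG : f =ᵐ[μ] ⇑G) :
    h.toLp f = G := by
  rw [← Lp.toLp_coeFn G (Lp.memLp G)]
  exact MemLp.toLp_congr h (Lp.memLp G) hfG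

noncomputable def secLp (μ : Measure Ω) [IsFiniteMeasure μ] (f : 𝒜 × Ω → ℝ) (a : 𝒜) :
    Lp ℝ 2 μ :=
  if h : MemLp (fun x => f (a, x)) 2 μ then h.toLp _ else 0

lemma secLp_eq {f : 𝒜 × Ω → ℝ} {a : 𝒜} (h : MemLp (fun x => f (a, x)) 2 μ) :
    secLp μ f a = h.toLp _ := dif_pos h

lemma secLp_eq_of {f : 𝒜 × Ω → ℝ} {a : 𝒜} {G : Lp ℝ 2 μ}
    (hfG : (fun x => f (a, x)) =ᵐ[μ] ⇑G) : secLp μ f a = G := by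
  have h : MemLp (fun x => f (a, x)) 2 μ := (Lp.memLp G).ae_eq hfG.symm
  rw [secLp_eq h]
  exact toLp_eq_of h hfG

lemma secLp_coeFn {f : 𝒜 × Ω → ℝ} {a : 𝒜} (h : MemLp (fun x => f (a, x)) 2 μ) :
    ⇑(secLp μ f a) =ᵐ[μ] fun x => f (a, x) := by
  rw [secLp_eq h]; exact h.coeFn_toLp

lemma unifIntegrable_of_dom {b : ℕ → Ω → ℝ} {G : Ω → ℝ} (hG : MemLp G 2 μ)
    (hdom : ∀ n x, |b n x| ≤ G x) : UnifIntegrable b 2 μ := by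
  intro ε hε
  obtain ⟨δ, hδ, h⟩ := hG.eLpNorm_indicator_le one_le_two ENNReal.ofNat_ne_top hε
  refine ⟨δ, hδ, fun i s hs hμs => le_trans (eLpNorm_mono fun x => ?_) (h s hs hμs)⟩
  by_cases hx : x ∈ s
  · simp only [Set.indicator_of_mem hx, Real.norm_eq_abs]
    exact (hdom i x).trans (le_abs_self _)
  · simp [Set.indicator_of_notMem hx]

lemma tendsto_toLp_dom {b : ℕ → Ω → ℝ} {blim G : Ω → ℝ}
    (hb : ∀ n, MemLp (b n) 2 μ) (hblim : MemLp blim 2 μ) (hG : MemLp G 2 μ)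
    (hdom : ∀ n x, |b n x| ≤ G x)
    (hlim : ∀ x, Tendsto (fun n => b n x) atTop (𝓝 (blim x))) :
    Tendsto (fun n => (hb n).toLp (b n)) atTop (𝓝 (hblim.toLp blim)) := by
  rw [Lp.tendsto_Lp_iff_tendsto_eLpNorm'']
  exact tendsto_Lp_finite_of_tendsto_ae one_le_two ENNReal.ofNat_ne_top
    (fun n => (hb n).1) hblim (unifIntegrable_of_dom hG hdom) (ae_of_all _ hlim)

lemma memLp_sec_of_bound {f : 𝒜 × Ω → ℝ} (hm : Measurable f) (C : ℝ)
    (hC : ∀ p, |f p| ≤ C) (a : 𝒜) : MemLp (fun x => f (a, x)) 2 μ :=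
  MemLp.of_bound ((hm.comp measurable_prodMk_left).aestronglyMeasurable) C
    (ae_of_all _ fun x => by simpa [Real.norm_eq_abs] using hC (a, x))

lemma aesm_secLp_indicator (PA : Measure 𝒜) {E : Set (𝒜 × Ω)} (hE : MeasurableSet E) :
    AEStronglyMeasurable (secLp μ (E.indicator fun _ => (1 : ℝ))) PA := by
  refine MeasurableSpace.induction_on_inter
    (C := fun E _ => AEStronglyMeasurable (secLp μ (Set.indicator E fun _ => (1 : ℝ))) PA)
    generateFrom_prod.symm isPiSystem_prod ?_ ?_ ?_ ?_ _ hE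
  · -- empty set
    show AEStronglyMeasurable (secLp μ (Set.indicator ∅ fun _ => (1 : ℝ))) PA
    have : secLp μ (Set.indicator (∅ : Set (𝒜 × Ω)) fun _ => (1 : ℝ))
        = fun _ : 𝒜 => (0 : Lp ℝ 2 μ) := by
      funext a
      refine secLp_eq_of ?_
      rw [show (fun x : Ω => Set.indicator (∅ : Set (𝒜 × Ω)) (fun _ => (1 : ℝ)) (a, x))
          = (0 : Ω → ℝ) from funext fun x => by simp]
      exact (Lp.coeFn_zero ℝ 2 μ).symm
    rw [this]; exact aestronglyMeasurable_const
  · -- rectangles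
    rintro T ⟨A, hA, B, hB, rfl⟩
    show AEStronglyMeasurable (secLp μ (Set.indicator (A ×ˢ B) fun _ => (1 : ℝ))) PA
    have : secLp μ (Set.indicator (A ×ˢ B) fun _ => (1 : ℝ))
        = fun a : 𝒜 => (A.indicator (fun _ => (1 : ℝ)) a) •
            (indicatorConstLp 2 hB (measure_ne_top μ B) (1 : ℝ)) := by
      funext a
      by_cases ha : a ∈ A
      · rw [Set.indicator_of_mem ha, one_smul]
        refine secLp_eq_of ?_
        filter_upwards [indicatorConstLp_coeFn (p := 2) (hs := hB)
          (hμs := measure_ne_top μ B) (c := (1 : ℝ))] with x hx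
        rw [hx]
        by_cases hxB : x ∈ B <;>
          simp [Set.indicator_apply, Set.mem_prod, ha, hxB]
      · rw [Set.indicator_of_notMem ha, zero_smul]
        refine secLp_eq_of ?_
        rw [show (fun x : Ω => Set.indicator (A ×ˢ B) (fun _ => (1 : ℝ)) (a, x))
            = (0 : Ω → ℝ) from funext fun x => by
              simp [Set.indicator_apply, Set.mem_prod, ha]]
        exact (Lp.coeFn_zero ℝ 2 μ).symm
    rw [this]
    exact ((measurable_const.indicator hA : Measurable (A.indicator fun _ => (1 : ℝ))).aestronglyMeasurable).smul
      (aestronglyMeasurable_const (b := indicatorConstLp 2 hB (measure_ne_top μ B) (1 : ℝ)))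
  · -- complements
    intro T hT ihT
    show AEStronglyMeasurable (secLp μ (Set.indicator Tᶜ fun _ => (1 : ℝ))) PA
    have h1 : MemLp (fun _ : Ω => (1 : ℝ)) 2 μ := memLp_const 1
    have hsec : ∀ a : 𝒜, MemLp (fun x => Set.indicator T (fun _ => (1 : ℝ)) (a, x)) 2 μ :=
      memLp_sec_of_bound (measurable_const.indicator hT) 1
        (fun p => by by_cases h : p ∈ T <;> simp [Set.indicator_apply, h])
    have : secLp μ (Set.indicator Tᶜ fun _ => (1 : ℝ))
        = fun a : 𝒜 => h1.toLp _ - secLp μ (Set.indicator T fun _ => (1 : ℝ)) a := by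
      funext a
      refine secLp_eq_of ?_
      filter_upwards [Lp.coeFn_sub (h1.toLp _) (secLp μ (Set.indicator T fun _ => (1 : ℝ)) a),
        h1.coeFn_toLp, secLp_coeFn (hsec a)] with x e1 e2 e3
      rw [e1, Pi.sub_apply, e2, e3]
      by_cases h : (a, x) ∈ T <;> simp [Set.indicator_apply, h]
    rw [this]
    exact aestronglyMeasurable_const.sub ihT
  · -- disjoint unions
    intro f hdisj hmeas ihf
    show AEStronglyMeasurable (secLp μ (Set.indicator (⋃ i, f i) fun _ => (1 : ℝ))) PA
    have hacc_meas : ∀ n, MeasurableSet (Set.accumulate f n) := fun n =>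
      MeasurableSet.biUnion (Set.to_countable _) fun i _ => hmeas i
    have hsec : ∀ (S : Set (𝒜 × Ω)), MeasurableSet S → ∀ a,
        MemLp (fun x => Set.indicator S (fun _ => (1 : ℝ)) (a, x)) 2 μ := fun S hS =>
      memLp_sec_of_bound (measurable_const.indicator hS) 1
        (fun p => by by_cases h : p ∈ S <;> simp [Set.indicator_apply, h])
    have hAcc : ∀ n, AEStronglyMeasurable
        (secLp μ (Set.indicator (Set.accumulate f n) fun _ => (1 : ℝ))) PA := by
      intro n
      induction n with
      | zero =>
        have : Set.accumulate f 0 = f 0 := by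
          ext z; simp [Set.mem_accumulate, Nat.le_zero]
        rw [this]; exact ihf 0
      | succ n ih =>
        have hstep : secLp μ (Set.indicator (Set.accumulate f (n + 1)) fun _ => (1 : ℝ))
            = fun a : 𝒜 => secLp μ (Set.indicator (Set.accumulate f n) fun _ => (1 : ℝ)) a
                + secLp μ (Set.indicator (f (n + 1)) fun _ => (1 : ℝ)) a := by
          funext a
          refine secLp_eq_of ?_
          filter_upwards [Lp.coeFn_add
              (secLp μ (Set.indicator (Set.accumulate f n) fun _ => (1 : ℝ)) a)
              (secLp μ (Set.indicator (f (n + 1)) fun _ => (1 : ℝ)) a),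
            secLp_coeFn (hsec _ (hacc_meas n) a),
            secLp_coeFn (hsec _ (hmeas (n + 1)) a)] with x e1 e2 e3
          rw [e1, Pi.add_apply, e2, e3]
          have hmem : (a, x) ∈ Set.accumulate f (n + 1)
              ↔ (a, x) ∈ Set.accumulate f n ∨ (a, x) ∈ f (n + 1) := by
            simp only [Set.mem_accumulate]
            constructor
            · rintro ⟨y, hy, h⟩
              rcases Nat.lt_or_ge y (n + 1) with h' | h'
              · exact Or.inl ⟨y, by omega, h⟩
              · have : y = n + 1 := by omega
                exact Or.inr (this ▸ h)
            · rintro (⟨y, hy, h⟩ | h)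
              · exact ⟨y, by omega, h⟩
              · exact ⟨n + 1, le_rfl, h⟩
          by_cases h1 : (a, x) ∈ Set.accumulate f n
          · have h2 : (a, x) ∉ f (n + 1) := by
              intro h2
              obtain ⟨i, hi, hmemi⟩ := Set.mem_accumulate.mp h1  -- i ≤ n
              exact Set.disjoint_left.mp (hdisj (by omega : i ≠ n + 1)) hmemi h2
            simp [Set.indicator_apply, hmem.mpr (Or.inl h1), h1, h2]
          · by_cases h2 : (a, x) ∈ f (n + 1)
            · simp [Set.indicator_apply, hmem.mpr (Or.inr h2), h1, h2]
            · have : (a, x) ∉ Set.accumulate f (n + 1) := fun h =>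
                (hmem.mp h).elim h1 h2
              simp [Set.indicator_apply, this, h1, h2]
        rw [hstep]
        exact ih.add (ihf (n + 1))
    refine aestronglyMeasurable_of_tendsto_ae atTop
      (f := fun n => secLp μ (Set.indicator (Set.accumulate f n) fun _ => (1 : ℝ))) hAcc ?_
    refine ae_of_all _ fun a => ?_
    have hU : MeasurableSet (⋃ i, f i) := MeasurableSet.iUnion hmeas
    have hptw : ∀ x, Tendsto
        (fun n => Set.indicator (Set.accumulate f n) (fun _ => (1 : ℝ)) (a, x)) atTop
        (𝓝 (Set.indicator (⋃ i, f i) (fun _ => (1 : ℝ)) (a, x))) := by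
      intro x
      by_cases h : (a, x) ∈ ⋃ i, f i
      · obtain ⟨i, hi⟩ := Set.mem_iUnion.mp h
        refine tendsto_atTop_of_eventually_const (i₀ := i) fun n hn => ?_
        have : (a, x) ∈ Set.accumulate f n := Set.mem_accumulate.mpr ⟨i, hn, hi⟩
        simp [Set.indicator_of_mem this, Set.indicator_of_mem h]
      · refine tendsto_atTop_of_eventually_const (i₀ := 0) fun n _ => ?_
        have : (a, x) ∉ Set.accumulate f n := fun hx => by
          obtain ⟨i, _, hi⟩ := Set.mem_accumulate.mp hx
          exact h (Set.mem_iUnion.mpr ⟨i, hi⟩)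
        simp [Set.indicator_of_notMem this, Set.indicator_of_notMem h]
    have := tendsto_toLp_dom (fun n => hsec _ (hacc_meas n) a) (hsec _ hU a)
      (memLp_const (1 : ℝ))
      (fun n x => by by_cases h : (a, x) ∈ Set.accumulate f n <;>
        simp [Set.indicator_apply, h])
      hptw
    refine Tendsto.congr (fun n => (secLp_eq (hsec _ (hacc_meas n) a)).symm) ?_
    rw [secLp_eq (hsec _ hU a)]
    exact this

lemma memLp_sec_simple (s : SimpleFunc (𝒜 × Ω) ℝ) (a : 𝒜) :
    MemLp (fun x => s (a, x)) 2 μ := by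
  obtain ⟨C, hC⟩ := s.exists_forall_norm_le
  exact memLp_sec_of_bound s.measurable C (fun p => by
    simpa [Real.norm_eq_abs] using hC p) a

lemma aesm_secLp_simple (PA : Measure 𝒜) (s : SimpleFunc (𝒜 × Ω) ℝ) :
    AEStronglyMeasurable (secLp μ ⇑s) PA := by
  induction s using SimpleFunc.induction with
  | @const c T hT =>
    have hcoe : ⇑(SimpleFunc.piecewise T hT (SimpleFunc.const _ c)
        (SimpleFunc.const _ (0 : ℝ))) = T.indicator fun _ => c := by
      funext p
      by_cases h : p ∈ T <;>
        simp [SimpleFunc.coe_piecewise, SimpleFunc.coe_const, Set.piecewise, h,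
          Set.indicator_apply]
    rw [hcoe]
    have hkey : secLp μ (T.indicator fun _ => c)
        = fun a : 𝒜 => c • secLp μ (T.indicator fun _ => (1 : ℝ)) a := by
      funext a
      refine secLp_eq_of ?_
      have hsec : MemLp (fun x => Set.indicator T (fun _ => (1 : ℝ)) (a, x)) 2 μ :=
        memLp_sec_of_bound (measurable_const.indicator hT) 1
          (fun p => by by_cases h : p ∈ T <;> simp [Set.indicator_apply, h]) a
      filter_upwards [Lp.coeFn_smul c (secLp μ (T.indicator fun _ => (1 : ℝ)) a),
        secLp_coeFn hsec] with x e1 e2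
      rw [e1, Pi.smul_apply, e2]
      by_cases h : (a, x) ∈ T <;> simp [Set.indicator_apply, h]
    rw [hkey]
    exact (aesm_secLp_indicator PA hT).const_smul c
  | @add f g _ ihf ihg =>
    have hkey : secLp μ ⇑(f + g) = fun a : 𝒜 => secLp μ ⇑f a + secLp μ ⇑g a := by
      funext a
      refine secLp_eq_of ?_
      filter_upwards [Lp.coeFn_add (secLp μ ⇑f a) (secLp μ ⇑g a),
        secLp_coeFn (memLp_sec_simple f a), secLp_coeFn (memLp_sec_simple g a)]
        with x e1 e2 e3
      rw [e1, Pi.add_apply, e2, e3]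
      simp [SimpleFunc.coe_add]
    rw [hkey]
    exact ihf.add ihg

lemma aesm_secLp_bdd (PA : Measure 𝒜) {b : 𝒜 × Ω → ℝ} (hb : Measurable b) (C : ℝ)
    (hC : ∀ p, |b p| ≤ C) : AEStronglyMeasurable (secLp μ b) PA := by
  set sn : ℕ → SimpleFunc (𝒜 × Ω) ℝ :=
    fun n => SimpleFunc.approxOn b hb Set.univ 0 (Set.mem_univ 0) n with hsn
  refine aestronglyMeasurable_of_tendsto_ae atTop
    (f := fun n => secLp μ ⇑(sn n)) (fun n => aesm_secLp_simple PA (sn n))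
    (ae_of_all _ fun a => ?_)
  have hmemn : ∀ n, MemLp (fun x => sn n (a, x)) 2 μ := fun n => memLp_sec_simple (sn n) a
  have hmem : MemLp (fun x => b (a, x)) 2 μ := memLp_sec_of_bound hb C hC a
  have hmemG : MemLp (fun x => ‖b (a, x)‖ + ‖b (a, x)‖) 2 μ := hmem.norm.add hmem.norm
  have hten := tendsto_toLp_dom hmemn hmem hmemG
    (fun n x => by
      have := SimpleFunc.norm_approxOn_zero_le hb (Set.mem_univ 0) (a, x) n
      simpa [Real.norm_eq_abs] using this)
    (fun x => SimpleFunc.tendsto_approxOn hb (Set.mem_univ 0) (by simp))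
  refine Tendsto.congr (fun n => (secLp_eq (hmemn n)).symm) ?_
  rw [secLp_eq hmem]
  exact hten

lemma aesm_secLp (PA : Measure 𝒜) {f : 𝒜 × Ω → ℝ} (hf : Measurable f)
    (hae : ∀ᵐ a ∂PA, MemLp (fun x => f (a, x)) 2 μ) :
    AEStronglyMeasurable (secLp μ f) PA := by
  set bn : ℕ → 𝒜 × Ω → ℝ := fun n p => max (min (f p) n) (-(n : ℝ)) with hbn
  have hbmeas : ∀ n, Measurable (bn n) := fun n =>
    (hf.min measurable_const).max measurable_const
  have hbbd : ∀ n p, |bn n p| ≤ (n : ℝ) := fun n p => abs_le.mpr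
    ⟨le_max_right _ _,
     max_le ((min_le_right _ _)) (neg_le_self (Nat.cast_nonneg n))⟩
  have hdom : ∀ n p, |bn n p| ≤ |f p| := fun n p => abs_le.mpr
    ⟨(le_min (neg_abs_le _) ((neg_nonpos.mpr (abs_nonneg _)).trans
        (Nat.cast_nonneg n))).trans (le_max_left _ _),
     max_le ((min_le_left _ _).trans (le_abs_self _))
        ((neg_nonpos.mpr (Nat.cast_nonneg n)).trans (abs_nonneg _))⟩
  have hlim : ∀ p, Tendsto (fun n => bn n p) atTop (𝓝 (f p)) := by
    intro p
    refine tendsto_atTop_of_eventually_const (i₀ := ⌈|f p|⌉₊) fun n hn => ?_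
    have habs : |f p| ≤ (n : ℝ) := (Nat.le_ceil _).trans (by exact_mod_cast hn)
    have h1 : f p ≤ (n : ℝ) := (le_abs_self _).trans habs
    have h2 : -(n : ℝ) ≤ f p := (abs_le.mp habs).1
    simp [hbn, min_eq_left h1, max_eq_left h2]
  refine aestronglyMeasurable_of_tendsto_ae atTop
    (f := fun n => secLp μ (bn n))
    (fun n => aesm_secLp_bdd PA (hbmeas n) n (hbbd n)) ?_
  filter_upwards [hae] with a ha
  have hmn : ∀ n, MemLp (fun x => bn n (a, x)) 2 μ := fun n =>
    memLp_sec_of_bound (hbmeas n) n (hbbd n) a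
  have hten := tendsto_toLp_dom hmn ha ha.norm
    (fun n x => by
      have := hdom n (a, x); rwa [← Real.norm_eq_abs (f (a, x))] at this)
    (fun x => hlim (a, x))
  refine Tendsto.congr (fun n => (secLp_eq (hmn n)).symm) ?_
  rw [secLp_eq ha]
  exact hten

lemma aesm_of_rep (PA : Measure 𝒜) {f : 𝒜 × Ω → ℝ} (hf : Measurable f)
    {F : 𝒜 → Lp ℝ 2 μ} (hrep : ∀ᵐ a ∂PA, ⇑(F a) =ᵐ[μ] fun x => f (a, x)) :
    AEStronglyMeasurable F PA := by
  have hae : ∀ᵐ a ∂PA, MemLp (fun x => f (a, x)) 2 μ :=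
    hrep.mono fun a ha => (Lp.memLp (F a)).ae_eq ha
  refine (aesm_secLp PA hf hae).congr ?_
  filter_upwards [hrep] with a ha
  exact secLp_eq_of ha.symm

end NeymanAux

/-- **Neyman orthogonality of the debiasing score with respect to the solution operator.**
With `h` a jointly measurable perturbation with sections in `L²(μ) ∩ L²(κ a)` (the `L²(μ)`
sections witnessed by `hL`) and the stated integrability, the map
`M(t) := ∫ [ g(S₀(a) + t·h(a,·)) + ∫∫ β₀(a,x)(y − s₀(a,x) − t·h(a,x)) dρ dκ ] dP_A`
is differentiable at `t = 0` with `M′(0) = 0`. -/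
theorem stmt6 {𝒜 Ω : Type*} [MeasurableSpace 𝒜] [MeasurableSpace Ω]
    (PA : Measure 𝒜) [IsProbabilityMeasure PA]
    (κ : Kernel 𝒜 Ω) [IsMarkovKernel κ]
    (μ : Measure Ω) [IsFiniteMeasure μ]
    (Cov : ℝ) (hCov : 0 < Cov)
    -- design overlap: μ ≪ κ a with dμ/dκ(a) ≤ Cov
    (hac : ∀ᵐ a ∂PA, μ ≪ κ a)
    (hbdd : ∀ᵐ a ∂PA, ∀ᵐ x ∂(κ a), μ.rnDeriv (κ a) x ≤ ENNReal.ofReal Cov)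
    -- the functional g, Fréchet differentiable with uniform second-order remainder bound
    (g : Lp ℝ 2 μ → ℝ) (Dg : Lp ℝ 2 μ → Lp ℝ 2 μ →L[ℝ] ℝ)
    (hdiff : ∀ u : Lp ℝ 2 μ, HasFDerivAt g (Dg u) u)
    (Cg : ℝ)
    (hrem : ∀ u h : Lp ℝ 2 μ, |g (u + h) - g u - Dg u h| ≤ Cg * ‖h‖ ^ 2)
    -- the true solution operator
    (s₀ : 𝒜 × Ω → ℝ) (hs₀ : Measurable s₀)
    (S₀ : 𝒜 → Lp ℝ 2 μ)
    (hS₀ : ∀ᵐ a ∂PA, ⇑(S₀ a) =ᵐ[μ] fun x => s₀ (a, x))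
    -- the debiasing weight β₀ with finite L²(P) norm and the conditional Riesz identity
    (β₀ : 𝒜 × Ω → ℝ) (hβ₀meas : Measurable β₀)
    (hβ₀P : Integrable (fun p => β₀ p ^ 2) (PA ⊗ₘ κ))
    (hriesz : ∀ᵐ a ∂PA, ∀ (h : Ω → ℝ), MemLp h 2 (κ a) → ∀ (hμ : MemLp h 2 μ),
      ∫ x, β₀ (a, x) * h x ∂(κ a) = Dg (S₀ a) (hμ.toLp h))
    -- the noise kernel ρ: unbiased, with finite second moments
    (ρ : Kernel (𝒜 × Ω) ℝ) [IsMarkovKernel ρ]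
    (hρmean : ∀ᵐ a ∂PA, ∀ᵐ x ∂(κ a), (∫ y, y ∂(ρ (a, x))) = s₀ (a, x))
    (hρsq : ∀ᵐ a ∂PA, ∀ᵐ x ∂(κ a), Integrable (fun y => y ^ 2) (ρ (a, x)))
    -- the perturbation h, with sections in L²(μ) (witnessed by hL) and in L²(κ a)
    (hf : 𝒜 × Ω → ℝ) (hfmeas : Measurable hf)
    (hfκ : ∀ᵐ a ∂PA, MemLp (fun x => hf (a, x)) 2 (κ a))
    (hL : 𝒜 → Lp ℝ 2 μ)
    (hhL : ∀ᵐ a ∂PA, ⇑(hL a) =ᵐ[μ] fun x => hf (a, x))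
    (hL2int : Integrable (fun a => ‖hL a‖ ^ 2) PA)
    -- integrability of the relevant maps
    (hint1 : Integrable (fun a => Dg (S₀ a) (hL a)) PA)
    (hint2 : Integrable (fun p => β₀ p * hf p) (PA ⊗ₘ κ))
    (hint3 : Integrable
      (fun z : 𝒜 × (Ω × ℝ) => β₀ (z.1, z.2.1) * (z.2.2 - s₀ (z.1, z.2.1)))
      (PA ⊗ₘ (κ ⊗ₖ ρ))) :
    HasDerivAt
      (fun t : ℝ => ∫ a,
        (g (S₀ a + t • hL a)
          + ∫ x, ∫ y, β₀ (a, x) * (y - s₀ (a, x) - t * hf (a, x)) ∂(ρ (a, x)) ∂(κ a)) ∂PA)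
      0 0 := by
  classical
  have hS₀m : AEStronglyMeasurable S₀ PA := NeymanAux.aesm_of_rep PA hs₀ hS₀
  have hhLm : AEStronglyMeasurable hL PA := NeymanAux.aesm_of_rep PA hfmeas hhL
  have hgcont : Continuous g := continuous_iff_continuousAt.mpr fun u => (hdiff u).continuousAt
  set D : 𝒜 → ℝ := fun a => Dg (S₀ a) (hL a) with hD
  -- Step 1: a.e. computation of the inner double integral
  have hcong : ∀ᵐ a ∂PA, ∀ t : ℝ,
      (∫ x, ∫ y, β₀ (a, x) * (y - s₀ (a, x) - t * hf (a, x)) ∂(ρ (a, x)) ∂(κ a))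
        = -(t * D a) := by
    filter_upwards [hρmean, hρsq, hriesz, hfκ, hhL] with a h1 h2 h3 h4 h5
    have hMemμ : MemLp (fun x => hf (a, x)) 2 μ := (Lp.memLp (hL a)).ae_eq h5
    have hB : (∫ x, β₀ (a, x) * hf (a, x) ∂(κ a)) = D a := by
      rw [h3 _ h4 hMemμ, NeymanAux.toLp_eq_of hMemμ h5.symm]
    intro t
    have hx : ∀ᵐ x ∂(κ a),
        (∫ y, β₀ (a, x) * (y - s₀ (a, x) - t * hf (a, x)) ∂(ρ (a, x)))
          = (-t) * (β₀ (a, x) * hf (a, x)) := by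
      filter_upwards [h1, h2] with x hx1 hx2
      have hyint : Integrable (fun y : ℝ => y) (ρ (a, x)) := by
        refine ((integrable_const (1 : ℝ)).add hx2).mono'
          measurable_id.aestronglyMeasurable (ae_of_all _ fun y => ?_)
        have h3' : |y| ≤ 1 + y ^ 2 := by nlinarith [sq_nonneg (|y| - 1), sq_abs y]
        simp only [Pi.add_apply, Real.norm_eq_abs, id_eq]
        exact h3'
      rw [show (fun y : ℝ => β₀ (a, x) * (y - s₀ (a, x) - t * hf (a, x)))
          = fun y : ℝ => β₀ (a, x) * (y - (s₀ (a, x) + t * hf (a, x))) from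
          funext fun y => by ring]
      rw [integral_const_mul, integral_sub hyint (integrable_const _), integral_const, hx1]
      simp only [probReal_univ, one_smul]
      ring
    rw [integral_congr_ae hx, integral_const_mul, hB]
    ring
  -- Step 2: rewrite the function of t
  have hfun : (fun t : ℝ => ∫ a, (g (S₀ a + t • hL a)
        + ∫ x, ∫ y, β₀ (a, x) * (y - s₀ (a, x) - t * hf (a, x)) ∂(ρ (a, x)) ∂(κ a)) ∂PA)
      = fun t : ℝ => ∫ a, (g (S₀ a + t • hL a) - t * D a) ∂PA := by
    funext t
    refine integral_congr_ae ?_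
    filter_upwards [hcong] with a ha
    rw [ha t]; ring
  rw [hfun]
  -- abbreviations
  have hψm : ∀ t : ℝ, AEStronglyMeasurable (fun a => g (S₀ a + t • hL a) - t * D a) PA :=
    fun t => (hgcont.comp_aestronglyMeasurable (hS₀m.add (hhLm.const_smul t))).sub
      (hint1.aestronglyMeasurable.const_mul t)
  have hbasem : AEStronglyMeasurable (fun a => g (S₀ a)) PA :=
    hgcont.comp_aestronglyMeasurable hS₀m
  set C' : ℝ := max Cg 0 with hC'def
  have hC' : 0 ≤ C' := le_max_right _ _
  have hRbd : ∀ (t : ℝ) (a : 𝒜),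
      |(g (S₀ a + t • hL a) - t * D a) - g (S₀ a)| ≤ C' * t ^ 2 * ‖hL a‖ ^ 2 := by
    intro t a
    have h := hrem (S₀ a) (t • hL a)
    rw [_root_.map_smul, smul_eq_mul] at h
    have hn : ‖t • hL a‖ ^ 2 = t ^ 2 * ‖hL a‖ ^ 2 := by
      rw [norm_smul, mul_pow, Real.norm_eq_abs, sq_abs]
    calc |(g (S₀ a + t • hL a) - t * D a) - g (S₀ a)|
        = |g (S₀ a + t • hL a) - g (S₀ a) - t * Dg (S₀ a) (hL a)| := by
          congr 1; ring
      _ ≤ Cg * ‖t • hL a‖ ^ 2 := h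
      _ = Cg * (t ^ 2 * ‖hL a‖ ^ 2) := by rw [hn]
      _ ≤ C' * t ^ 2 * ‖hL a‖ ^ 2 := by
          rw [show Cg * (t ^ 2 * ‖hL a‖ ^ 2) = Cg * t ^ 2 * ‖hL a‖ ^ 2 from by ring]
          have h2 : Cg * t ^ 2 ≤ C' * t ^ 2 :=
            mul_le_mul_of_nonneg_right (le_max_left _ _) (sq_nonneg _)
          exact mul_le_mul_of_nonneg_right h2 (sq_nonneg _)
  have hbint : ∀ t : ℝ, Integrable (fun a => C' * t ^ 2 * ‖hL a‖ ^ 2) PA := fun t =>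
    (hL2int.const_mul (C' * t ^ 2)).congr (ae_of_all _ fun a => by ring)
  have hRm : ∀ t : ℝ, AEStronglyMeasurable
      (fun a => (g (S₀ a + t • hL a) - t * D a) - g (S₀ a)) PA :=
    fun t => (hψm t).sub hbasem
  have hRint : ∀ t : ℝ, Integrable
      (fun a => (g (S₀ a + t • hL a) - t * D a) - g (S₀ a)) PA := fun t => by
    refine Integrable.mono' (hbint t) (hRm t) (ae_of_all _ fun a => ?_)
    rw [Real.norm_eq_abs]
    exact hRbd t a
  set c0 : ℝ := ∫ a, ‖hL a‖ ^ 2 ∂PA with hc0def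
  have hc0 : 0 ≤ c0 := integral_nonneg fun a => sq_nonneg _
  by_cases hInt : Integrable (fun a => g (S₀ a)) PA
  · -- integrable case
    have hψt : ∀ t : ℝ, Integrable (fun a => g (S₀ a + t • hL a) - t * D a) PA := fun t =>
      (hInt.add (hRint t)).congr (ae_of_all _ fun a => by
        simp only [Pi.add_apply]; ring)
    have hM0 : (∫ a, (g (S₀ a + (0 : ℝ) • hL a) - (0 : ℝ) * D a) ∂PA)
        = ∫ a, g (S₀ a) ∂PA := by
      refine integral_congr_ae (ae_of_all _ fun a => ?_)
      simp [zero_smul]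
    have hkey : ∀ t : ℝ,
        |(∫ a, (g (S₀ a + t • hL a) - t * D a) ∂PA) - ∫ a, g (S₀ a) ∂PA|
          ≤ (C' * c0) * t ^ 2 := by
      intro t
      rw [← integral_sub (hψt t) hInt]
      have h1 : |∫ a, ((g (S₀ a + t • hL a) - t * D a) - g (S₀ a)) ∂PA|
          ≤ ∫ a, |(g (S₀ a + t • hL a) - t * D a) - g (S₀ a)| ∂PA := by
        simpa [Real.norm_eq_abs] using
          norm_integral_le_integral_norm (μ := PA)
            (f := fun a => (g (S₀ a + t • hL a) - t * D a) - g (S₀ a))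
      refine h1.trans ?_
      have h2 : (∫ a, |(g (S₀ a + t • hL a) - t * D a) - g (S₀ a)| ∂PA)
          ≤ ∫ a, C' * t ^ 2 * ‖hL a‖ ^ 2 ∂PA :=
        integral_mono_ae (hRint t).abs (hbint t) (ae_of_all _ fun a => hRbd t a)
      refine h2.trans ?_
      rw [show (fun a => C' * t ^ 2 * ‖hL a‖ ^ 2)
          = fun a => (C' * t ^ 2) * ‖hL a‖ ^ 2 from funext fun a => by ring,
        integral_const_mul]
      rw [← hc0def]
      ring_nf
      exact le_refl _
    rw [hasDerivAt_iff_isLittleO]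
    simp only [sub_zero, smul_zero, sub_zero]
    refine Asymptotics.isLittleO_iff.mpr fun ε hε => ?_
    have hev : ∀ᶠ t : ℝ in 𝓝 0, |t| < ε / (C' * c0 + 1) := by
      have h := eventually_abs_sub_lt (0 : ℝ) (by positivity : 0 < ε / (C' * c0 + 1))
      simpa using h
    filter_upwards [hev] with t ht
    have hb := hkey t
    rw [← hM0] at hb
    have h3 : (C' * c0) * t ^ 2 ≤ ε * |t| := by
      have h4 : 0 ≤ C' * c0 := mul_nonneg hC' hc0
      have h5 : (C' * c0) * |t| ≤ ε := by
        rcases eq_or_lt_of_le (abs_nonneg t) with h6 | h6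
        · rw [← h6]; simpa using hε.le
        · have h7 : (C' * c0) * |t| ≤ (C' * c0 + 1) * (ε / (C' * c0 + 1)) := by
            apply mul_le_mul (by linarith) ht.le (abs_nonneg t) (by positivity)
          rwa [mul_div_cancel₀ ε (by positivity : C' * c0 + 1 ≠ 0)] at h7
      calc (C' * c0) * t ^ 2 = ((C' * c0) * |t|) * |t| := by
            rw [pow_two, ← abs_mul_abs_self t]; ring
        _ ≤ ε * |t| := mul_le_mul_of_nonneg_right h5 (abs_nonneg t)
    rw [Real.norm_eq_abs, Real.norm_eq_abs]
    exact (abs_le.mpr (abs_le.mp hb)).trans h3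
  · -- non-integrable case: the integral is identically zero
    have hnone : ∀ t : ℝ, ¬ Integrable (fun a => g (S₀ a + t • hL a) - t * D a) PA := by
      intro t ht
      exact hInt ((ht.sub (hRint t)).congr (ae_of_all _ fun a => by
        simp only [Pi.sub_apply]; ring))
    have hzero : (fun t : ℝ => ∫ a, (g (S₀ a + t • hL a) - t * D a) ∂PA)
        = fun _ : ℝ => (0 : ℝ) := funext fun t => integral_undef (hnone t)
    rw [hzero]
    exact hasDerivAt_const 0 0
end

section
/- Primal characterization of the conditional Riesz representer (population Riesz risk): call β : 𝒜 × Ω → ℝ admissible if it is jointly measurable, β(a,·) ∈ L²(Ω, κ(a)) for P_A-a.e. a, ‖β‖_{L²(P)} < ∞, and a ↦ Dg_{S₀(a)}(β(a,·)) is P_A-integrable, and define the population Riesz risk R(β) := ∫_𝒜 [ ∫_Ω β(a,x)² dκ(a)(x) − 2·Dg_{S₀(a)}(β(a,·)) ] dP_A(a). Then for every admissible β, R(β) − R(β₀) = ‖β − β₀‖²_{L²(P)} ≥ 0; in particular β₀ minimizes R over all admissible β, and any admissible minimizer of R coincides with β₀ P-almost everywhere. -/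
open MeasureTheory ProbabilityTheory

/-- **Primal characterization of the conditional Riesz representer (population Riesz
risk).** For admissible `β` (jointly measurable, sections in `L²(κ a)` with `L²(μ)`
sections `βL`, finite `L²(P)` norm, and integrable derivative term), the population Riesz
risk `R(β) := ∫ [ ∫ β(a,x)² dκ(a) − 2·Dg_{S₀(a)}(β(a,·)) ] dP_A` satisfies
`R(β) − R(β₀) = ‖β − β₀‖²_{L²(P)} ≥ 0`; hence `β₀` minimizes `R` and any admissible
minimizer coincides with `β₀` `P`-almost everywhere. -/
theorem stmt12 {𝒜 Ω : Type*} [MeasurableSpace 𝒜] [MeasurableSpace Ω]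
    (PA : Measure 𝒜) [IsProbabilityMeasure PA]
    (κ : Kernel 𝒜 Ω) [IsMarkovKernel κ]
    (μ : Measure Ω) [IsFiniteMeasure μ]
    (Cov : ℝ) (hCov : 0 < Cov)
    -- design overlap: μ ≪ κ a with dμ/dκ(a) ≤ Cov
    (hac : ∀ᵐ a ∂PA, μ ≪ κ a)
    (hbdd : ∀ᵐ a ∂PA, ∀ᵐ x ∂(κ a), μ.rnDeriv (κ a) x ≤ ENNReal.ofReal Cov)
    -- the functional g, Fréchet differentiable
    (g : Lp ℝ 2 μ → ℝ) (Dg : Lp ℝ 2 μ → Lp ℝ 2 μ →L[ℝ] ℝ)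
    (hdiff : ∀ u : Lp ℝ 2 μ, HasFDerivAt g (Dg u) u)
    -- the true solution operator
    (s₀ : 𝒜 × Ω → ℝ) (hs₀ : Measurable s₀)
    (S₀ : 𝒜 → Lp ℝ 2 μ)
    (hS₀ : ∀ᵐ a ∂PA, ⇑(S₀ a) =ᵐ[μ] fun x => s₀ (a, x))
    -- β₀: admissible, satisfying the conditional Riesz identity
    (β₀ : 𝒜 × Ω → ℝ) (hβ₀meas : Measurable β₀)
    (hβ₀κ : ∀ᵐ a ∂PA, MemLp (fun x => β₀ (a, x)) 2 (κ a))
    (β₀L : 𝒜 → Lp ℝ 2 μ)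
    (hβ₀L : ∀ᵐ a ∂PA, ⇑(β₀L a) =ᵐ[μ] fun x => β₀ (a, x))
    (hβ₀P : Integrable (fun p => β₀ p ^ 2) (PA ⊗ₘ κ))
    (hβ₀D : Integrable (fun a => Dg (S₀ a) (β₀L a)) PA)
    (hriesz : ∀ᵐ a ∂PA, ∀ (h : Ω → ℝ), MemLp h 2 (κ a) → ∀ (hμ : MemLp h 2 μ),
      ∫ x, β₀ (a, x) * h x ∂(κ a) = Dg (S₀ a) (hμ.toLp h))
    -- β: an arbitrary admissible candidate
    (β : 𝒜 × Ω → ℝ) (hβmeas : Measurable β)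
    (hβκ : ∀ᵐ a ∂PA, MemLp (fun x => β (a, x)) 2 (κ a))
    (βL : 𝒜 → Lp ℝ 2 μ)
    (hβL : ∀ᵐ a ∂PA, ⇑(βL a) =ᵐ[μ] fun x => β (a, x))
    (hβP : Integrable (fun p => β p ^ 2) (PA ⊗ₘ κ))
    (hβD : Integrable (fun a => Dg (S₀ a) (βL a)) PA) :
    ((∫ a, ((∫ x, β (a, x) ^ 2 ∂(κ a)) - 2 * Dg (S₀ a) (βL a)) ∂PA)
        - ∫ a, ((∫ x, β₀ (a, x) ^ 2 ∂(κ a)) - 2 * Dg (S₀ a) (β₀L a)) ∂PA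
      = ∫ a, ∫ x, (β (a, x) - β₀ (a, x)) ^ 2 ∂(κ a) ∂PA)
    ∧ 0 ≤ ∫ a, ∫ x, (β (a, x) - β₀ (a, x)) ^ 2 ∂(κ a) ∂PA
    ∧ ((∫ a, ((∫ x, β (a, x) ^ 2 ∂(κ a)) - 2 * Dg (S₀ a) (βL a)) ∂PA)
          ≤ ∫ a, ((∫ x, β₀ (a, x) ^ 2 ∂(κ a)) - 2 * Dg (S₀ a) (β₀L a)) ∂PA
        → β =ᵐ[PA ⊗ₘ κ] β₀) := by

  -- μ is dominated by Cov • κ a, a.e. a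
  have hle : ∀ᵐ a ∂PA, μ ≤ (ENNReal.ofReal Cov) • κ a := by
    filter_upwards [hac, hbdd] with a ha hb
    refine Measure.le_iff.2 fun s hs => ?_
    have h1 : μ s = ∫⁻ x in s, μ.rnDeriv (κ a) x ∂(κ a) :=
      (Measure.setLIntegral_rnDeriv ha s).symm
    have h2 : ∫⁻ x in s, μ.rnDeriv (κ a) x ∂(κ a)
        ≤ ∫⁻ _ in s, ENNReal.ofReal Cov ∂(κ a) :=
      lintegral_mono_ae (ae_restrict_of_ae hb)
    rw [h1]
    refine h2.trans ?_
    simp [Measure.smul_apply, mul_comm]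
  have hβμ : ∀ᵐ a ∂PA, MemLp (fun x => β (a, x)) 2 μ := by
    filter_upwards [hle, hβκ] with a h1 h2
    exact MemLp.of_measure_le_smul ENNReal.ofReal_ne_top h1 h2
  have hβ₀μ : ∀ᵐ a ∂PA, MemLp (fun x => β₀ (a, x)) 2 μ := by
    filter_upwards [hle, hβ₀κ] with a h1 h2
    exact MemLp.of_measure_le_smul ENNReal.ofReal_ne_top h1 h2
  -- pointwise key identity
  have key : ∀ᵐ a ∂PA,
      ((∫ x, β (a, x) ^ 2 ∂(κ a)) - 2 * Dg (S₀ a) (βL a))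
        - ((∫ x, β₀ (a, x) ^ 2 ∂(κ a)) - 2 * Dg (S₀ a) (β₀L a))
      = ∫ x, (β (a, x) - β₀ (a, x)) ^ 2 ∂(κ a) := by
    filter_upwards [hriesz, hβκ, hβ₀κ, hβμ, hβ₀μ, hβL, hβ₀L]
      with a hr hβk hβ₀k hβm hβ₀m hβl hβ₀l
    have h1 : ∫ x, β₀ (a, x) * β (a, x) ∂(κ a) = Dg (S₀ a) (βL a) := by
      rw [hr _ hβk hβm]
      congr 1
      exact Lp.ext ((hβm.coeFn_toLp).trans hβl.symm)
    have h2 : ∫ x, β₀ (a, x) * β₀ (a, x) ∂(κ a) = Dg (S₀ a) (β₀L a) := by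
      rw [hr _ hβ₀k hβ₀m]
      congr 1
      exact Lp.ext ((hβ₀m.coeFn_toLp).trans hβ₀l.symm)
    have hiβ : Integrable (fun x => β (a, x) ^ 2) (κ a) := hβk.integrable_sq
    have hiβ₀ : Integrable (fun x => β₀ (a, x) ^ 2) (κ a) := hβ₀k.integrable_sq
    have hmul : Integrable (fun x => β₀ (a, x) * β (a, x)) (κ a) := by
      rw [← memLp_one_iff_integrable]
      have := hβk.smul (φ := fun x => β₀ (a, x)) hβ₀k (r := 1)
        (hpqr := ⟨by norm_num [ENNReal.inv_two_add_inv_two]⟩)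
      simpa [Pi.smul_apply, smul_eq_mul, Pi.mul_def] using this
    have h2' : ∫ x, β₀ (a, x) ^ 2 ∂(κ a) = Dg (S₀ a) (β₀L a) := by
      rw [← h2]
      exact integral_congr_ae (ae_of_all _ fun x => by ring)
    have hexp : ∫ x, (β (a, x) - β₀ (a, x)) ^ 2 ∂(κ a)
        = (∫ x, β (a, x) ^ 2 ∂(κ a)) - 2 * (∫ x, β₀ (a, x) * β (a, x) ∂(κ a))
          + ∫ x, β₀ (a, x) ^ 2 ∂(κ a) := by
      have hcm : ∫ x, 2 * (β₀ (a, x) * β (a, x)) ∂(κ a)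
          = 2 * ∫ x, β₀ (a, x) * β (a, x) ∂(κ a) := by
        simpa [smul_eq_mul] using
          integral_smul (2 : ℝ) (fun x => β₀ (a, x) * β (a, x)) (μ := κ a)
      have e1 : ∀ x, (β (a, x) - β₀ (a, x)) ^ 2
          = β (a, x) ^ 2 - 2 * (β₀ (a, x) * β (a, x)) + β₀ (a, x) ^ 2 := fun x => by ring
      have hsubInt : Integrable (fun x => β (a, x) ^ 2 - 2 * (β₀ (a, x) * β (a, x)))
          (κ a) := hiβ.sub (hmul.const_mul 2)
      simp_rw [e1]
      rw [integral_add hsubInt hiβ₀, integral_sub hiβ (hmul.const_mul 2), hcm]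
    rw [hexp, ← h1, ← h2']
    ring
  -- integrability of the outer integrands
  have hIβ : Integrable (fun a => ∫ x, β (a, x) ^ 2 ∂(κ a)) PA := by
    have h := ((Measure.integrable_compProd_iff hβP.aestronglyMeasurable).1 hβP).2
    refine h.congr (ae_of_all _ fun a => ?_)
    refine integral_congr_ae (ae_of_all _ fun x => ?_)
    simp [Real.norm_eq_abs, abs_pow, sq_abs]
  have hIβ₀ : Integrable (fun a => ∫ x, β₀ (a, x) ^ 2 ∂(κ a)) PA := by
    have h := ((Measure.integrable_compProd_iff hβ₀P.aestronglyMeasurable).1 hβ₀P).2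
    refine h.congr (ae_of_all _ fun a => ?_)
    refine integral_congr_ae (ae_of_all _ fun x => ?_)
    simp [Real.norm_eq_abs, abs_pow, sq_abs]
  have hD : Integrable (fun p => (β p - β₀ p) ^ 2) (PA ⊗ₘ κ) := by
    have hg : Integrable (fun p => 2 * β p ^ 2 + 2 * β₀ p ^ 2) (PA ⊗ₘ κ) :=
      (hβP.const_mul 2).add (hβ₀P.const_mul 2)
    refine hg.mono
      (((hβmeas.sub hβ₀meas).pow_const 2).aestronglyMeasurable)
      (ae_of_all _ fun p => ?_)
    rw [Real.norm_eq_abs, Real.norm_eq_abs, abs_of_nonneg (sq_nonneg _),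
      abs_of_nonneg (by positivity)]
    nlinarith [sq_nonneg (β p + β₀ p)]
  have hF : Integrable (fun a => (∫ x, β (a, x) ^ 2 ∂(κ a)) - 2 * Dg (S₀ a) (βL a)) PA :=
    hIβ.sub (hβD.const_mul 2)
  have hG : Integrable (fun a => (∫ x, β₀ (a, x) ^ 2 ∂(κ a)) - 2 * Dg (S₀ a) (β₀L a)) PA :=
    hIβ₀.sub (hβ₀D.const_mul 2)
  have hmain :
      (∫ a, ((∫ x, β (a, x) ^ 2 ∂(κ a)) - 2 * Dg (S₀ a) (βL a)) ∂PA)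
        - ∫ a, ((∫ x, β₀ (a, x) ^ 2 ∂(κ a)) - 2 * Dg (S₀ a) (β₀L a)) ∂PA
      = ∫ a, ∫ x, (β (a, x) - β₀ (a, x)) ^ 2 ∂(κ a) ∂PA := by
    rw [← integral_sub hF hG]
    exact integral_congr_ae key
  have hnonneg : 0 ≤ ∫ a, ∫ x, (β (a, x) - β₀ (a, x)) ^ 2 ∂(κ a) ∂PA :=
    integral_nonneg fun a => integral_nonneg fun x => sq_nonneg _
  refine ⟨hmain, hnonneg, fun hminle => ?_⟩
  have h0 : ∫ a, ∫ x, (β (a, x) - β₀ (a, x)) ^ 2 ∂(κ a) ∂PA = 0 :=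
    le_antisymm (by rw [← hmain]; linarith) hnonneg
  rw [← Measure.integral_compProd hD] at h0
  have hz := (integral_eq_zero_iff_of_nonneg (fun p => sq_nonneg _) hD).1 h0
  filter_upwards [hz] with p hp
  have : (β p - β₀ p) ^ 2 = 0 := hp
  have := sq_eq_zero_iff.1 this
  linarith
end

section
/- Consistency of the empirical variance of the pseudo-outcomes: on a probability space, let (ψ_i)_{i≥1} be i.i.d. real random variables with E[ψ₁²] < ∞, and for each n let δ_{n,1}, …, δ_{n,n} be real random variables with (1/n) Σ_{i=1}^n δ_{n,i}² → 0 in probability. Set ψ̃_{n,i} := ψ_i + δ_{n,i} and θ̂_n := (1/n) Σ_{i=1}^n ψ̃_{n,i}. Then (1/n) Σ_{i=1}^n (ψ̃_{n,i} − θ̂_n)² → Var(ψ₁) in probability. -/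
open MeasureTheory ProbabilityTheory Filter Topology

lemma sum_centered_sq_expand (n : ℕ) (hn : (n:ℝ) ≠ 0) (u v : ℕ → ℝ) :
    (1/(n:ℝ)) * ∑ i ∈ Finset.range n,
        ((u i + v i) - (1/(n:ℝ)) * ∑ j ∈ Finset.range n, (u j + v j)) ^ 2
      = ((1/(n:ℝ)) * ∑ i ∈ Finset.range n, u i ^ 2
          + 2 * ((1/(n:ℝ)) * ∑ i ∈ Finset.range n, u i * v i)
          + (1/(n:ℝ)) * ∑ i ∈ Finset.range n, v i ^ 2)
        - ((1/(n:ℝ)) * ∑ i ∈ Finset.range n, u i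
            + (1/(n:ℝ)) * ∑ i ∈ Finset.range n, v i) ^ 2 := by
  have h : ∀ i ∈ Finset.range n,
      ((u i + v i) - (1/(n:ℝ)) * ∑ j ∈ Finset.range n, (u j + v j)) ^ 2
        = (u i ^ 2 + 2 * (u i * v i) + v i ^ 2)
          - (2 * ((1/(n:ℝ)) * ∑ j ∈ Finset.range n, (u j + v j))) * (u i + v i)
          + ((1/(n:ℝ)) * ∑ j ∈ Finset.range n, (u j + v j)) ^ 2 := fun i _ => by ring
  rw [Finset.sum_congr rfl h]
  simp only [Finset.sum_add_distrib, Finset.sum_sub_distrib, ← Finset.mul_sum,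
    Finset.sum_const, Finset.card_range, nsmul_eq_mul]
  field_simp
  ring

set_option maxHeartbeats 1000000 in
/-- **Consistency of the empirical variance of the pseudo-outcomes.** Let `(ψ i)` be
i.i.d. with `E[ψ₁²] < ∞` and suppose `(1/n) Σᵢ δ_{n,i}² → 0` in probability. With
`ψ̃_{n,i} := ψ i + δ_{n,i}` and `θ̂_n := (1/n) Σᵢ ψ̃_{n,i}`, the empirical variance
`(1/n) Σᵢ (ψ̃_{n,i} − θ̂_n)²` converges in probability to `Var(ψ₁)`. -/
theorem stmt15 {Ω' : Type*} [MeasurableSpace Ω'] (P : Measure Ω') [IsProbabilityMeasure P]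
    (ψ : ℕ → Ω' → ℝ)
    (hψmeas : ∀ i, Measurable (ψ i))
    (hψindep : iIndepFun ψ P)
    (hψident : ∀ i, Measure.map (ψ i) P = Measure.map (ψ 0) P)
    (hψL2 : MemLp (ψ 0) 2 P)
    (δ : ℕ → ℕ → Ω' → ℝ)
    (hδ : TendstoInMeasure P
        (fun (n : ℕ) ω => (1 / (n : ℝ)) * ∑ i ∈ Finset.range n, δ n i ω ^ 2)
        Filter.atTop (0 : Ω' → ℝ)) :
    TendstoInMeasure P
      (fun (n : ℕ) ω =>
        (1 / (n : ℝ)) * ∑ i ∈ Finset.range n,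
          ((ψ i ω + δ n i ω)
            - (1 / (n : ℝ)) * ∑ j ∈ Finset.range n, (ψ j ω + δ n j ω)) ^ 2)
      Filter.atTop (fun _ => variance (ψ 0) P) := by
  -- abbreviations
  set a : ℕ → Ω' → ℝ := fun n ω => (1/(n:ℝ)) * ∑ i ∈ Finset.range n, ψ i ω ^ 2 with ha
  set m : ℕ → Ω' → ℝ := fun n ω => (1/(n:ℝ)) * ∑ i ∈ Finset.range n, ψ i ω with hm
  set E2 : ℝ := ∫ ω, ψ 0 ω ^ 2 ∂P with hE2
  set μ0 : ℝ := ∫ ω, ψ 0 ω ∂P with hμ0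
  have hident : ∀ i, IdentDistrib (ψ i) (ψ 0) P P := fun i =>
    ⟨(hψmeas i).aemeasurable, (hψmeas 0).aemeasurable, hψident i⟩
  have hindep : Pairwise (Function.onFun (IndepFun · · P) ψ) := fun i j hij => hψindep.indepFun hij
  -- SLLN for ψ
  have slln1 : ∀ᵐ ω ∂P, Tendsto (fun n => m n ω) atTop (𝓝 μ0) := by
    filter_upwards [strong_law_ae ψ (hψL2.integrable one_le_two) hindep hident] with ω hω
    simpa [hm, smul_eq_mul, one_div] using hω
  -- SLLN for ψ²
  have slln2 : ∀ᵐ ω ∂P, Tendsto (fun n => a n ω) atTop (𝓝 E2) := by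
    have hsq : Measurable fun y : ℝ => y ^ 2 := measurable_id.pow_const 2
    have hint : Integrable (fun ω => ψ 0 ω ^ 2) P := hψL2.integrable_sq
    have hindep2 : Pairwise (Function.onFun (IndepFun · · P) fun i ω => ψ i ω ^ 2) :=
      fun i j hij => (hψindep.indepFun hij).comp hsq hsq
    have hident2 : ∀ i, IdentDistrib (fun ω => ψ i ω ^ 2) (fun ω => ψ 0 ω ^ 2) P P :=
      fun i => (hident i).comp hsq
    filter_upwards [strong_law_ae (fun i ω => ψ i ω ^ 2) hint hindep2 hident2] with ω hω
    simpa [ha, smul_eq_mul, one_div] using hω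
  have hVar : variance (ψ 0) P = E2 - μ0 ^ 2 := by
    rw [variance_eq_sub hψL2]
    simp [hE2, hμ0]
  -- measurability
  have hmeas_a : ∀ n, Measurable (a n) := fun n =>
    measurable_const.mul (Finset.measurable_sum _ fun i _ => (hψmeas i).pow_const 2)
  have hmeas_m : ∀ n, Measurable (m n) := fun n =>
    measurable_const.mul (Finset.measurable_sum _ fun i _ => hψmeas i)
  -- convergence in measure of the ψ-part and the auxiliary sequences
  have T1 : TendstoInMeasure P (fun n ω => a n ω - (m n ω) ^ 2) atTop
      (fun _ => E2 - μ0 ^ 2) := by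
    apply tendstoInMeasure_of_tendsto_ae
      (fun n => ((hmeas_a n).sub ((hmeas_m n).pow_const 2)).aestronglyMeasurable)
    filter_upwards [slln1, slln2] with ω h1 h2
    exact h2.sub (h1.pow 2)
  have T2 : TendstoInMeasure P a atTop (fun _ => E2) := by
    apply tendstoInMeasure_of_tendsto_ae (fun n => (hmeas_a n).aestronglyMeasurable)
    filter_upwards [slln2] with ω h2 using h2
  have T3 : TendstoInMeasure P m atTop (fun _ => μ0) := by
    apply tendstoInMeasure_of_tendsto_ae (fun n => (hmeas_m n).aestronglyMeasurable)
    filter_upwards [slln1] with ω h1 using h1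
  rw [tendstoInMeasure_iff_dist]
  intro ε hε
  set K : ℝ := max (E2 + 1) (|μ0| + 1) with hK
  have hK0 : (0:ℝ) ≤ K := le_trans (by positivity) (le_max_right _ _)
  set L : ℝ := 2 * Real.sqrt K + 2 * K + 2 with hL
  have hL0 : (0:ℝ) < L := by positivity
  set η : ℝ := min 1 ((ε / 3 / L) ^ 2) with hη
  have hη0 : 0 < η := lt_min one_pos (by positivity)
  have hsqrtη : Real.sqrt η ≤ ε / 3 / L := by
    calc Real.sqrt η ≤ Real.sqrt ((ε / 3 / L) ^ 2) :=
          Real.sqrt_le_sqrt (min_le_right _ _)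
      _ = ε / 3 / L := by
          rw [Real.sqrt_sq (by positivity)]
  have hηsqrt : η ≤ Real.sqrt η := by
    nlinarith [Real.sq_sqrt hη0.le, Real.sqrt_nonneg η,
      Real.sqrt_le_one.2 (min_le_left (1:ℝ) ((ε / 3 / L) ^ 2))]
  -- the key set inclusion
  have key : ∀ n : ℕ, 1 ≤ n →
      {x | ε ≤ dist ((1/(n:ℝ)) * ∑ i ∈ Finset.range n,
          ((ψ i x + δ n i x) - (1/(n:ℝ)) * ∑ j ∈ Finset.range n, (ψ j x + δ n j x)) ^ 2)
          (variance (ψ 0) P)} ⊆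
        {x | ε / 3 ≤ dist (a n x - (m n x) ^ 2) (E2 - μ0 ^ 2)} ∪
          ({x | (1:ℝ) ≤ dist (a n x) E2} ∪
            ({x | (1:ℝ) ≤ dist (m n x) μ0} ∪
              {x | η ≤ dist ((1/(n:ℝ)) * ∑ i ∈ Finset.range n, δ n i x ^ 2)
                ((0 : Ω' → ℝ) x)})) := by
    intro n hn x hx
    simp only [Set.mem_setOf_eq] at hx
    by_contra hcon
    simp only [Set.mem_union, Set.mem_setOf_eq, not_or, not_le] at hcon
    obtain ⟨h1, h2, h3, h4⟩ := hcon
    simp only [ha, hm] at h1 h2 h3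
    have hn' : ((n:ℝ)) ≠ 0 := Nat.cast_ne_zero.2 (Nat.one_le_iff_ne_zero.1 hn)
    rw [sum_centered_sq_expand n hn' (fun i => ψ i x) (fun i => δ n i x)] at hx
    set A := (1/(n:ℝ)) * ∑ i ∈ Finset.range n, ψ i x ^ 2 with hA
    set Mm := (1/(n:ℝ)) * ∑ i ∈ Finset.range n, ψ i x with hMm
    set Dv := (1/(n:ℝ)) * ∑ i ∈ Finset.range n, δ n i x ^ 2 with hDv
    set C := (1/(n:ℝ)) * ∑ i ∈ Finset.range n, ψ i x * δ n i x with hC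
    set dd := (1/(n:ℝ)) * ∑ i ∈ Finset.range n, δ n i x with hdd
    -- basic positivity
    have hA0 : 0 ≤ A := by
      rw [hA]
      exact mul_nonneg (by positivity) (Finset.sum_nonneg fun i _ => sq_nonneg _)
    have hD0 : 0 ≤ Dv := by
      rw [hDv]
      exact mul_nonneg (by positivity) (Finset.sum_nonneg fun i _ => sq_nonneg _)
    -- Cauchy-Schwarz bounds
    have hC2 : C ^ 2 ≤ A * Dv := by
      have hcs := Finset.sum_mul_sq_le_sq_mul_sq (Finset.range n)
        (fun i => ψ i x) (fun i => δ n i x)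
      have h' := mul_le_mul_of_nonneg_left hcs (sq_nonneg (1/(n:ℝ)))
      calc C ^ 2 = (1/(n:ℝ)) ^ 2 * (∑ i ∈ Finset.range n, ψ i x * δ n i x) ^ 2 := by
            rw [hC, mul_pow]
        _ ≤ (1/(n:ℝ)) ^ 2 * ((∑ i ∈ Finset.range n, ψ i x ^ 2)
              * ∑ i ∈ Finset.range n, δ n i x ^ 2) := h'
        _ = A * Dv := by rw [hA, hDv]; ring
    have hd2 : dd ^ 2 ≤ Dv := by
      have hcs := sq_sum_le_card_mul_sum_sq (s := Finset.range n)
        (f := fun i => δ n i x)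
      simp only [Finset.card_range] at hcs
      have h' := mul_le_mul_of_nonneg_left hcs (sq_nonneg (1/(n:ℝ)))
      calc dd ^ 2 = (1/(n:ℝ)) ^ 2 * (∑ i ∈ Finset.range n, δ n i x) ^ 2 := by
            rw [hdd, mul_pow]
        _ ≤ (1/(n:ℝ)) ^ 2 * ((n:ℝ) * ∑ i ∈ Finset.range n, δ n i x ^ 2) := h'
        _ = Dv := by rw [hDv]; field_simp
    -- numerical bounds
    have hDη : Dv < η := by
      have he : dist Dv ((0 : Ω' → ℝ) x) = Dv := by
        simp [Real.dist_eq, abs_of_nonneg hD0]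
      rwa [he] at h4
    have h2' : |A - E2| < 1 := by rwa [Real.dist_eq] at h2
    have h3' : |Mm - μ0| < 1 := by rwa [Real.dist_eq] at h3
    have hAK : A < K := by
      have : A - E2 < 1 := (abs_lt.1 h2').2
      calc A < E2 + 1 := by linarith
        _ ≤ K := le_max_left _ _
    have hMK : |Mm| < K := by
      have h3'' := abs_lt.1 h3'
      calc |Mm| < |μ0| + 1 := by
            rw [abs_lt]
            constructor
            · nlinarith [abs_nonneg μ0, neg_abs_le μ0]
            · nlinarith [abs_nonneg μ0, le_abs_self μ0]
        _ ≤ K := le_max_right _ _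
    have hCb : |C| ≤ Real.sqrt K * Real.sqrt η := by
      calc |C| = Real.sqrt (C ^ 2) := (Real.sqrt_sq_eq_abs C).symm
        _ ≤ Real.sqrt (K * η) := Real.sqrt_le_sqrt (by nlinarith)
        _ = Real.sqrt K * Real.sqrt η := Real.sqrt_mul hK0 η
    have hddb : |dd| ≤ Real.sqrt η := by
      calc |dd| = Real.sqrt (dd ^ 2) := (Real.sqrt_sq_eq_abs dd).symm
        _ ≤ Real.sqrt η := Real.sqrt_le_sqrt (by nlinarith)
    have hdd2b : dd ^ 2 ≤ Real.sqrt η := le_trans hd2 (le_trans hDη.le hηsqrt)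
    have hDvb : Dv ≤ Real.sqrt η := le_trans hDη.le hηsqrt
    have hMd : |Mm * dd| ≤ K * Real.sqrt η := by
      rw [abs_mul]
      exact mul_le_mul hMK.le hddb (abs_nonneg _) hK0
    have hMd1 := (abs_le.1 hMd).1
    have hMd2 := (abs_le.1 hMd).2
    have hC1 := (abs_le.1 hCb).1
    have hC1' := (abs_le.1 hCb).2
    have hq : |A - Mm ^ 2 - (E2 - μ0 ^ 2)| < ε / 3 := by
      rw [Real.dist_eq] at h1
      have : A - Mm ^ 2 - (E2 - μ0 ^ 2) = A - Mm ^ 2 - E2 + μ0 ^ 2 := by ring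
      rw [this]
      calc |A - Mm ^ 2 - E2 + μ0 ^ 2| = |A - Mm ^ 2 - (E2 - μ0 ^ 2)| := by ring_nf
        _ < ε / 3 := by
            have he : A - Mm ^ 2 - (E2 - μ0 ^ 2) = (A - Mm ^ 2) - (E2 - μ0 ^ 2) := by ring
            rw [he]; exact h1
    have hq1 := (abs_lt.1 hq).1
    have hq2 := (abs_lt.1 hq).2
    have hexpand : L * Real.sqrt η = 2 * Real.sqrt K * Real.sqrt η
        + 2 * K * Real.sqrt η + 2 * Real.sqrt η := by rw [hL]; ring
    have hLη : L * Real.sqrt η ≤ ε / 3 := by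
      calc L * Real.sqrt η ≤ L * (ε / 3 / L) :=
            mul_le_mul_of_nonneg_left hsqrtη hL0.le
        _ = ε / 3 := by field_simp
    -- assemble
    rw [Real.dist_eq, hVar] at hx
    have hid : (A + 2 * C + Dv) - (Mm + dd) ^ 2 - (E2 - μ0 ^ 2)
        = (A - Mm ^ 2 - (E2 - μ0 ^ 2)) + 2 * C + Dv - 2 * (Mm * dd) - dd ^ 2 := by ring
    have hfin : |(A + 2 * C + Dv) - (Mm + dd) ^ 2 - (E2 - μ0 ^ 2)| < ε := by
      rw [hid, abs_lt]
      constructor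
      · linarith [sq_nonneg dd, Real.sqrt_nonneg η]
      · linarith [sq_nonneg dd, Real.sqrt_nonneg η]
    rw [show A + 2 * C + Dv - (Mm + dd) ^ 2 - (E2 - μ0 ^ 2)
        = A + 2 * C + Dv - (Mm + dd) ^ 2 - (E2 - μ0 ^ 2) from rfl] at hfin
    exact absurd hx (not_le.2 hfin)
  -- conclude by squeezing
  have hsum : Tendsto (fun n =>
      P {x | ε / 3 ≤ dist (a n x - (m n x) ^ 2) (E2 - μ0 ^ 2)} +
        (P {x | (1:ℝ) ≤ dist (a n x) E2} +
          (P {x | (1:ℝ) ≤ dist (m n x) μ0} +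
            P {x | η ≤ dist ((1/(n:ℝ)) * ∑ i ∈ Finset.range n, δ n i x ^ 2)
              ((0 : Ω' → ℝ) x)})))
      atTop (𝓝 0) := by
    have := (tendstoInMeasure_iff_dist.1 T1 (ε/3) (by positivity)).add
      ((tendstoInMeasure_iff_dist.1 T2 1 one_pos).add ((tendstoInMeasure_iff_dist.1 T3 1 one_pos).add (tendstoInMeasure_iff_dist.1 hδ η hη0)))
    simpa using this
  apply tendsto_of_tendsto_of_tendsto_of_le_of_le' tendsto_const_nhds hsum
  · exact Filter.Eventually.of_forall fun n => zero_le
  · filter_upwards [eventually_ge_atTop 1] with n hn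
    refine le_trans (measure_mono (key n hn)) ?_
    refine le_trans (measure_union_le _ _) ?_
    refine add_le_add le_rfl ?_
    refine le_trans (measure_union_le _ _) ?_
    exact add_le_add le_rfl (measure_union_le _ _)
end
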